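/- arXiv:2309.04202 — 2 statements merged into one kernel-verified Lean document; each statement's English description precedes it below -/
import Mathlib

section
/- Let X be a finite-dimensional real inner product space, let n ≥ 2, and let A_0, A_1, …, A_{n-1} be points in X, with indices read cyclically (A_n = A_0, A_{n+1} = A_1), such that A_i ≠ A_{i+1} for all i. For i = 1, …, n set φ_i := π − ∠A_{i-1}A_iA_{i+1}. If φ_1 + φ_2 + ⋯ + φ_n = 2π, then the points A_0, A_1, …, A_{n-1} all lie in a common two-dimensional affine subspace of X. -/
/-!
Write the polygon as its list of edge vectors, which are nonzero and sum to zero. Replacing two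
consecutive edges `x, y` by `x + y` does not increase the total turning, by the triangle
inequality for angles, and removing an antipodal pair `x, -x` does not either; descending to a
2-gon `[x, -x]`, whose turning is `2π`, shows that the turning is always at least `2π`. When it
equals `2π`, each of these steps is an equality, and the equality case of the triangle inequality
for angles puts the removed edge in the plane spanned by its neighbours, unless the merged polygon
is degenerate (its remaining edges all lie on the line of `x + y`), in which case everything lies
in the span of `x` and `y`.
-/

open Real EuclideanGeometry
open scoped NNReal

namespace InnerProductGeometry

variable {V : Type*} [NormedAddCommGroup V] [InnerProductSpace ℝ V]

noncomputable def pathTurning : List V → ℝ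
  | x :: y :: t => angle x y + pathTurning (y :: t)
  | _ => 0

/-- Total turning of the closed polygon with edge vectors `x :: t`; prepending the last edge
accounts for the turn from it back to the first one. -/
noncomputable def closedTurning : List V → ℝ
  | [] => 0
  | x :: t => pathTurning (t.getLastD x :: x :: t)

@[simp] lemma pathTurning_singleton (x : V) : pathTurning [x] = 0 := rfl

@[simp] lemma pathTurning_cons_cons (x y : V) (t : List V) :
    pathTurning (x :: y :: t) = angle x y + pathTurning (y :: t) := rfl

@[simp] lemma closedTurning_cons (x : V) (t : List V) :
    closedTurning (x :: t) = angle (t.getLastD x) x + pathTurning (x :: t) := rfl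

lemma pathTurning_nonneg : ∀ l : List V, 0 ≤ pathTurning l
  | x :: y :: t => add_nonneg (angle_nonneg x y) (pathTurning_nonneg (y :: t))
  | [] | [_] => le_rfl

lemma pathTurning_cons_append_singleton (x y : V) (t : List V) :
    pathTurning (x :: t ++ [y]) = pathTurning (x :: t) + angle (t.getLastD x) y := by
  induction t generalizing x with
  | nil => simp
  | cons z t ih =>
    show pathTurning (x :: z :: (t ++ [y])) = _
    rw [pathTurning_cons_cons, ← List.cons_append, ih, List.getLastD_cons, pathTurning_cons_cons,
      add_assoc]

lemma pathTurning_map_range (f : ℕ → V) (m : ℕ) :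
    pathTurning ((List.range (m + 1)).map f) = ∑ i ∈ Finset.range m, angle (f i) (f (i + 1)) := by
  have map_range_succ (g : ℕ → V) (k : ℕ) :
      (List.range (k + 1)).map g = g 0 :: (List.range k).map (fun i => g (i + 1)) := by
    rw [List.range_succ_eq_map, List.map_cons, List.map_map]; rfl
  induction m generalizing f with
  | zero => simp
  | succ m ih =>
    rw [map_range_succ, map_range_succ _ m, pathTurning_cons_cons,
      ← map_range_succ (fun i => f (i + 1)), ih, Finset.sum_range_succ', add_comm]

lemma closedTurning_map_range {f : ℕ → V} {n : ℕ} (hf : f n = f 0) :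
    closedTurning ((List.range n).map f) = ∑ i ∈ Finset.range n, angle (f i) (f (i + 1)) := by
  cases n with
  | zero => simp [closedTurning]
  | succ m =>
    rw [← pathTurning_map_range, List.range_succ (n := m + 1), List.map_append,
      List.map_singleton, hf, List.range_succ_eq_map, List.map_cons, closedTurning_cons,
      pathTurning_cons_append_singleton, add_comm]

lemma closedTurning_add_cons_le {y : V} (hy : y ≠ 0) (x z : V) (t : List V) :
    closedTurning ((x + y) :: z :: t) ≤ closedTurning (x :: y :: z :: t) := by
  simp only [closedTurning_cons, List.getLastD_cons, pathTurning_cons_cons]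
  linarith [angle_le_angle_add_angle (t.getLastD z) x (x + y),
    angle_le_angle_add_angle (x + y) y z, angle_eq_angle_add_add_angle_add x hy,
    angle_comm y (x + y)]

lemma closedTurning_add_two_mul_angle_le {x : V} (hx : x ≠ 0) (z : V) (t : List V) :
    closedTurning (z :: t) + 2 * angle (-x) z ≤ closedTurning (x :: -x :: z :: t) := by
  simp only [closedTurning_cons, List.getLastD_cons, pathTurning_cons_cons,
    angle_self_neg_of_nonzero hx]
  linarith [angle_le_angle_add_angle (t.getLastD z) x z, angle_neg_left x z]

lemma mem_span_singleton_of_pathTurning_eq_zero {x : V} {t : List V}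
    (h : pathTurning (x :: t) = 0) : ∀ v ∈ x :: t, v ∈ ℝ ∙ x := by
  induction t generalizing x with
  | nil => simp
  | cons y t ih =>
    rw [pathTurning_cons_cons] at h
    have hxy : angle x y = 0 := by linarith [angle_nonneg x y, pathTurning_nonneg (y :: t)]
    obtain ⟨-, r, -, rfl⟩ := angle_eq_zero_iff.1 hxy
    have hspan : ℝ ∙ (r • x) ≤ ℝ ∙ x := Submodule.span_singleton_smul_le _ _ _
    rw [List.forall_mem_cons]
    exact ⟨Submodule.mem_span_singleton_self x,
      fun v hv => hspan (ih (by linarith [angle_nonneg x (r • x)]) v hv)⟩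

theorem two_pi_le_closedTurning : ∀ {l : List V}, l ≠ [] → 0 ∉ l → l.sum = 0 →
    2 * π ≤ closedTurning l
  | [], hl, _, _ => (hl rfl).elim
  | [_], _, h0, hsum => (h0 (by simp_all)).elim
  | [x, y], _, h0, hsum => by
    obtain rfl : y = -x := eq_neg_of_add_eq_zero_right (by simpa using hsum)
    have hx : x ≠ 0 := fun hx => h0 (by simp [hx])
    simp only [closedTurning_cons, List.getLastD_cons, List.getLastD_nil, pathTurning_cons_cons,
      pathTurning_singleton, angle_self_neg_of_nonzero hx, angle_neg_self_of_nonzero hx]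
    linarith
  | x :: y :: z :: t, _, h0, hsum => by
    by_cases hxy : x + y = 0
    · obtain rfl := eq_neg_of_add_eq_zero_right hxy
      have hx : x ≠ 0 := fun hx => h0 (by simp [hx])
      have := two_pi_le_closedTurning (l := z :: t) (List.cons_ne_nil _ _)
        (fun h => h0 (by simp_all)) (by simpa using hsum)
      linarith [closedTurning_add_two_mul_angle_le hx z t, angle_nonneg (-x) z]
    · have hy : y ≠ 0 := fun hy => h0 (by simp [hy])
      have := two_pi_le_closedTurning (l := (x + y) :: z :: t) (List.cons_ne_nil _ _)
        (by simp_all [eq_comm]) (by simpa [add_assoc] using hsum)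
      linarith [closedTurning_add_cons_le hy x z t]
termination_by l => l.length

open Submodule in
lemma exists_span_pair_of_closedTurning_add_cons_eq {x y z a b : V} {t : List V}
    (hx : x ≠ 0) (hy : y ≠ 0) (hmerged : closedTurning ((x + y) :: z :: t) = 2 * π)
    (h2π : closedTurning (x :: y :: z :: t) = 2 * π)
    (hab : ∀ v ∈ (x + y) :: z :: t, v ∈ span ℝ {a, b}) :
    ∃ a b : V, ∀ v ∈ x :: y :: z :: t, v ∈ span ℝ {a, b} := by
  set L := t.getLastD z
  simp only [closedTurning_cons, List.getLastD_cons, pathTurning_cons_cons] at hmerged h2π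
  -- Equality in `closedTurning_add_cons_le` is equality in both triangle inequalities it uses.
  have hsplit := angle_eq_angle_add_add_angle_add x hy
  have hLx := angle_le_angle_add_angle L x (x + y)
  have hyz := angle_le_angle_add_angle (x + y) y z
  have hL : angle L (x + y) = angle L x + angle x (x + y) := by
    linarith [angle_comm y (x + y)]
  have hz : angle (x + y) z = angle (x + y) y + angle y z := by
    linarith [angle_comm y (x + y)]
  rw [List.forall_mem_cons] at hab
  obtain ⟨hxy_mem, hzt_mem⟩ := hab
  have hL_mem : L ∈ span ℝ {a, b} := hzt_mem L List.getLastD_mem_cons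
  have mem_of_mem_span_nnreal {v p q : V} (hv : v ∈ span ℝ≥0 {p, q}) (hp : p ∈ span ℝ {a, b})
      (hq : q ∈ span ℝ {a, b}) : v ∈ span ℝ {a, b} :=
    span_le.2 (Set.pair_subset hp hq) (span_le_restrictScalars ℝ≥0 ℝ _ hv)
  have extend (h : x ∈ span ℝ {a, b} ∨ y ∈ span ℝ {a, b}) :
      ∀ v ∈ x :: y :: z :: t, v ∈ span ℝ {a, b} := by
    rw [List.forall_mem_cons, List.forall_mem_cons]
    rcases h with h | h
    · exact ⟨h, by simpa using sub_mem hxy_mem h, hzt_mem⟩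
    · exact ⟨by simpa using sub_mem hxy_mem h, h, hzt_mem⟩
  rcases (angle_eq_angle_add_angle_iff hx).1 hL with hLπ | hx_mem
  · rcases (angle_eq_angle_add_angle_iff hy).1 hz with hzπ | hy_mem
    · -- Both turns at `x + y` are `π`, so the remaining edges are all parallel to `x + y`.
      have hflat : pathTurning (z :: t) = 0 := by linarith
      obtain ⟨-, r, -, rfl⟩ := angle_eq_pi_iff.1 hzπ
      have hxy : x + y ∈ span ℝ {x, y} := add_mem (subset_span (by simp)) (subset_span (by simp))
      have hline : ℝ ∙ (r • (x + y)) ≤ span ℝ {x, y} :=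
        (span_singleton_smul_le _ _ _).trans ((span_singleton_le_iff_mem _ _).2 hxy)
      refine ⟨x, y, ?_⟩
      rw [List.forall_mem_cons, List.forall_mem_cons]
      exact ⟨subset_span (by simp), subset_span (by simp),
        fun v hv => hline (mem_span_singleton_of_pathTurning_eq_zero hflat v hv)⟩
    · exact ⟨a, b, extend (.inr (mem_of_mem_span_nnreal hy_mem hxy_mem (hzt_mem z (by simp))))⟩
  · exact ⟨a, b, extend (.inl (mem_of_mem_span_nnreal hx_mem hL_mem hxy_mem))⟩

open Submodule in
theorem exists_span_pair_of_closedTurning_eq_two_pi : ∀ {l : List V}, 0 ∉ l → l.sum = 0 →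
    closedTurning l = 2 * π → ∃ a b : V, ∀ v ∈ l, v ∈ span ℝ {a, b}
  | [], _, _, h2π => by simp [closedTurning] at h2π
  | [_], h0, hsum, _ => (h0 (by simp_all)).elim
  | [x, y], _, _, _ => ⟨x, y, fun v hv => subset_span (by simpa using hv)⟩
  | x :: y :: z :: t, h0, hsum, h2π => by
    by_cases hxy : x + y = 0
    · obtain rfl := eq_neg_of_add_eq_zero_right hxy
      have hx : x ≠ 0 := fun hx => h0 (by simp [hx])
      have hzt0 : 0 ∉ z :: t := fun h => h0 (by simp_all)
      have hzt_sum : (z :: t).sum = 0 := by simpa using hsum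
      have hle := closedTurning_add_two_mul_angle_le hx z t
      have hge := two_pi_le_closedTurning (List.cons_ne_nil z t) hzt0 hzt_sum
      obtain ⟨a, b, hab⟩ := exists_span_pair_of_closedTurning_eq_two_pi hzt0 hzt_sum
        (by linarith [angle_nonneg (-x) z])
      have hzero : angle (-x) z = 0 := by linarith [angle_nonneg (-x) z]
      obtain ⟨-, r, hr, rfl⟩ := angle_eq_zero_iff.1 hzero
      have hneg : -x ∈ span ℝ {a, b} := by
        simpa [smul_smul, hr.ne'] using smul_mem _ r⁻¹ (hab _ List.mem_cons_self)
      refine ⟨a, b, ?_⟩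
      rw [List.forall_mem_cons, List.forall_mem_cons]
      exact ⟨by simpa using neg_mem hneg, hneg, hab⟩
    · have hx : x ≠ 0 := fun hx => h0 (by simp [hx])
      have hy : y ≠ 0 := fun hy => h0 (by simp [hy])
      have hmerged0 : 0 ∉ (x + y) :: z :: t := by simp_all [eq_comm]
      have hmerged_sum : ((x + y) :: z :: t).sum = 0 := by simpa [add_assoc] using hsum
      have hmerged : closedTurning ((x + y) :: z :: t) = 2 * π :=
        le_antisymm (h2π ▸ closedTurning_add_cons_le hy x z t)
          (two_pi_le_closedTurning (List.cons_ne_nil _ _) hmerged0 hmerged_sum)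
      obtain ⟨a, b, hab⟩ :=
        exists_span_pair_of_closedTurning_eq_two_pi hmerged0 hmerged_sum hmerged
      exact exists_span_pair_of_closedTurning_add_cons_eq hx hy hmerged h2π hab
termination_by l => l.length

end InnerProductGeometry

namespace EuclideanGeometry

variable {V P : Type*} [NormedAddCommGroup V] [InnerProductSpace ℝ V] [MetricSpace P]
  [NormedAddTorsor V P]

lemma pi_sub_angle_eq_angle_vsub (p₁ p₂ p₃ : P) :
    π - ∠ p₁ p₂ p₃ = InnerProductGeometry.angle (p₂ -ᵥ p₁) (p₃ -ᵥ p₂) := by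
  rw [EuclideanGeometry.angle, ← neg_vsub_eq_vsub_rev p₂ p₁, InnerProductGeometry.angle_neg_left]
  ring

end EuclideanGeometry

open InnerProductGeometry Submodule in
theorem closed_polygon_exterior_angle_sum_eq_two_pi_coplanar_general
    {X : Type*} [NormedAddCommGroup X] [InnerProductSpace ℝ X]
    (n : ℕ) (A : ℕ → X)
    (hper : ∀ i, A (i + n) = A i)
    (hne : ∀ i, A i ≠ A (i + 1))
    (heq : ∑ i ∈ Finset.range n,
      (π - EuclideanGeometry.angle (A i) (A (i + 1)) (A (i + 2))) = 2 * π) :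
    ∃ s : AffineSubspace ℝ X, Module.finrank ℝ s.direction ≤ 2 ∧ ∀ i, A i ∈ s := by
  set u : ℕ → X := fun i => A (i + 1) - A i
  have hn_pos : 0 < n := Nat.pos_of_ne_zero fun h => by simp [h] at heq
  have hA : A n = A 0 := by simpa using hper 0
  have hu : u n = u 0 := by simp only [u, add_comm n 1, hper, hA]
  have h0 : 0 ∉ (List.range n).map u := by
    simp only [List.mem_map, List.mem_range, not_exists, not_and]
    exact fun i _ h => hne i (sub_eq_zero.1 h).symm
  have hsum : ((List.range n).map u).sum = 0 := by rw [List.sum_range_sub, hA, sub_self]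
  have hturn : closedTurning ((List.range n).map u) = 2 * π := by
    rw [closedTurning_map_range hu, ← heq]
    exact Finset.sum_congr rfl fun i _ => by
      rw [pi_sub_angle_eq_angle_vsub, vsub_eq_sub, vsub_eq_sub]
  obtain ⟨a, b, hab⟩ := exists_span_pair_of_closedTurning_eq_two_pi h0 hsum hturn
  refine ⟨AffineSubspace.mk' (A 0) (span ℝ {a, b}), ?_, fun i => ?_⟩
  · classical
    rw [AffineSubspace.direction_mk', ← Finset.coe_pair]
    exact (finrank_span_finset_le_card _).trans Finset.card_le_two
  · rw [← Function.Periodic.map_mod_nat hper i, AffineSubspace.mem_mk', vsub_eq_sub,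
      ← Finset.sum_range_sub]
    exact sum_mem fun k hk => hab (u k) (List.mem_map_of_mem (List.mem_range.2
      ((Finset.mem_range.1 hk).trans (Nat.mod_lt i hn_pos))))

/-- **Lemma (equality case of the closed polygon angle sum).** If the sum of
the exterior angles `π − ∠ A_{i-1} A_i A_{i+1}` of a closed polygonal chain in a
finite-dimensional real inner product space equals `2π`, then all the points
lie in a common affine subspace whose direction has dimension at most 2. -/
theorem closed_polygon_exterior_angle_sum_eq_two_pi_coplanar
    {X : Type*} [NormedAddCommGroup X] [InnerProductSpace ℝ X]
    [FiniteDimensional ℝ X]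
    (n : ℕ) (hn : 2 ≤ n) (A : ℕ → X)
    (hper : ∀ i, A (i + n) = A i)
    (hne : ∀ i, A i ≠ A (i + 1))
    (heq : ∑ i ∈ Finset.range n,
      (π - EuclideanGeometry.angle (A i) (A (i + 1)) (A (i + 2))) = 2 * π) :
    ∃ s : AffineSubspace ℝ X, Module.finrank ℝ s.direction ≤ 2 ∧ ∀ i, A i ∈ s :=
  closed_polygon_exterior_angle_sum_eq_two_pi_coplanar_general n A hper hne heq
end

section
/- Let λ be a Borel measure on ℝ with uncountable support such that ∫ min(x², 1) dλ(x) < ∞, and define f(t) := (∫ sin²(tx) dλ(x))^{1/2}. Let m₁, m₂ be real numbers with m₁ ≠ 0, m₂ ≠ 0 and m₁ + m₂ ≠ 0. Then the three numbers f(|m₁|), f(|m₂|), f(|m₁ + m₂|) satisfy the strict triangle inequalities: f(|m₁ + m₂|) < f(|m₁|) + f(|m₂|), f(|m₁|) < f(|m₂|) + f(|m₁ + m₂|), and f(|m₂|) < f(|m₁|) + f(|m₁ + m₂|); that is, there exists a nondegenerate triangle with these side lengths. -/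
open Real MeasureTheory

/-- The topological support of a measure on `ℝ`: all points every open
neighbourhood of which has positive measure. -/
def measureSupport (μ : MeasureTheory.Measure ℝ) : Set ℝ :=
  {x : ℝ | ∀ U : Set ℝ, IsOpen U → x ∈ U → μ U ≠ 0}

/-! Pointwise `|sin ((a + b) x)| ≤ |sin (a x)| + |sin (b x)|`, so Minkowski's inequality in
`L²(λ)` gives `f (a + b) ≤ f a + f b`. The pointwise inequality is strict off the countable set
where `sin (a x)` or `sin (b x)` vanishes, hence at some point of the uncountable support of `λ`,
and by continuity on an open set of positive measure; this makes the integral inequality strict.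
Since `f` is even, the other two inequalities are the same statement for the pairs
`(m₁ + m₂, -m₂)` and `(m₁ + m₂, -m₁)`. -/

namespace MeasureTheory.MemLp

variable {α : Type*} [MeasurableSpace α] {μ : Measure α} {f g : α → ℝ}

lemma sqrt_integral_sq_eq_norm_toLp (hf : MemLp f 2 μ) :
    √(∫ x, f x ^ 2 ∂μ) = ‖hf.toLp f‖ := by
  rw [Lp.norm_toLp, hf.eLpNorm_eq_integral_rpow_norm two_ne_zero ENNReal.ofNat_ne_top,
    ENNReal.toReal_ofReal (by positivity), Real.sqrt_eq_rpow]
  simp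

lemma sqrt_integral_add_sq_le (hf : MemLp f 2 μ) (hg : MemLp g 2 μ) :
    √(∫ x, (f x + g x) ^ 2 ∂μ) ≤ √(∫ x, f x ^ 2 ∂μ) + √(∫ x, g x ^ 2 ∂μ) := by
  rw [hf.sqrt_integral_sq_eq_norm_toLp, hg.sqrt_integral_sq_eq_norm_toLp]
  refine (hf.add hg).sqrt_integral_sq_eq_norm_toLp.trans_le ?_
  rw [toLp_add]
  exact norm_add_le _ _

end MeasureTheory.MemLp

lemma integral_lt_integral_of_lt_of_mem_measureSupport {μ : Measure ℝ} {f g : ℝ → ℝ}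
    (hf : Continuous f) (hg : Continuous g) (hfi : Integrable f μ) (hgi : Integrable g μ)
    (hle : f ≤ g) {x₀ : ℝ} (hx₀ : x₀ ∈ measureSupport μ) (hlt : f x₀ < g x₀) :
    ∫ x, f x ∂μ < ∫ x, g x ∂μ := by
  rw [← sub_pos, ← integral_sub hgi hfi,
    integral_pos_iff_support_of_nonneg (fun x => sub_nonneg.2 (hle x)) (hgi.sub hfi)]
  refine (pos_iff_ne_zero.2 (hx₀ _ (isOpen_lt hf hg) hlt)).trans_le (measure_mono ?_)
  exact fun x hx => (sub_pos.2 hx).ne'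

lemma abs_cos_lt_one_of_sin_ne_zero {y : ℝ} (hy : sin y ≠ 0) : |cos y| < 1 := by
  refine (abs_cos_le_one y).lt_of_ne fun h => hy ?_
  exact sin_eq_zero_iff_cos_eq.2 ((abs_eq zero_le_one).1 h)

lemma abs_sin_add_le (x y : ℝ) : |sin (x + y)| ≤ |sin x| + |sin y| := by
  rw [sin_add]
  refine (abs_add_le _ _).trans ?_
  rw [abs_mul, abs_mul]
  gcongr
  · exact mul_le_of_le_one_right (abs_nonneg _) (abs_cos_le_one y)
  · exact mul_le_of_le_one_left (abs_nonneg _) (abs_cos_le_one x)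

lemma abs_sin_add_lt {x y : ℝ} (hx : sin x ≠ 0) (hy : sin y ≠ 0) :
    |sin (x + y)| < |sin x| + |sin y| := by
  rw [sin_add]
  refine (abs_add_le _ _).trans_lt ?_
  rw [abs_mul, abs_mul]
  gcongr
  · exact mul_lt_of_lt_one_right (abs_pos.2 hx) (abs_cos_lt_one_of_sin_ne_zero hy)
  · exact mul_lt_of_lt_one_left (abs_pos.2 hy) (abs_cos_lt_one_of_sin_ne_zero hx)

lemma countable_setOf_sin_mul_eq_zero {a : ℝ} (ha : a ≠ 0) :
    {x : ℝ | sin (a * x) = 0}.Countable := by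
  refine (Set.countable_range fun k : ℤ => k * π / a).mono fun x hx => ?_
  obtain ⟨k, hk⟩ := sin_eq_zero_iff.1 hx
  exact ⟨k, (div_eq_iff ha).2 (hk.trans (mul_comm a x))⟩

lemma exists_mem_measureSupport_sin_mul_ne_zero {μ : Measure ℝ}
    (hunc : ¬ (measureSupport μ).Countable) {a b : ℝ} (ha : a ≠ 0) (hb : b ≠ 0) :
    ∃ x ∈ measureSupport μ, sin (a * x) ≠ 0 ∧ sin (b * x) ≠ 0 := by
  by_contra! h
  refine hunc (((countable_setOf_sin_mul_eq_zero ha).union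
    (countable_setOf_sin_mul_eq_zero hb)).mono fun x hx => ?_)
  by_cases hax : sin (a * x) = 0
  · exact Or.inl hax
  · exact Or.inr (h x hx hax)

lemma sin_sq_le_min_sq_one (y : ℝ) : sin y ^ 2 ≤ min (y ^ 2) 1 :=
  le_min sin_sq_le_sq (sin_sq_le_one y)

lemma min_mul_sq_one_le (t x : ℝ) : min ((t * x) ^ 2) 1 ≤ max (t ^ 2) 1 * min (x ^ 2) 1 := by
  rcases le_total (x ^ 2) 1 with h | h
  · rw [min_eq_left h, mul_pow]
    exact (min_le_left _ _).trans
      (mul_le_mul_of_nonneg_right (le_max_left _ _) (sq_nonneg x))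
  · rw [min_eq_right h, mul_one]
    exact (min_le_right _ _).trans (le_max_right _ _)

lemma memLp_two_sin_mul {μ : Measure ℝ} (hint : Integrable (fun x : ℝ => min (x ^ 2) 1) μ)
    (t : ℝ) : MemLp (fun x => sin (t * x)) 2 μ := by
  have hcont : Continuous fun x => sin (t * x) := by fun_prop
  refine (memLp_two_iff_integrable_sq hcont.aestronglyMeasurable).2 <|
    (hint.const_mul (max (t ^ 2) 1)).mono' (hcont.pow 2).aestronglyMeasurable
      (Filter.Eventually.of_forall fun x => ?_)
  rw [Real.norm_of_nonneg (sq_nonneg _)]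
  exact (sin_sq_le_min_sq_one _).trans (min_mul_sq_one_le t x)

theorem sqrt_integral_sin_add_mul_sq_lt {μ : Measure ℝ}
    (hunc : ¬ (measureSupport μ).Countable) (hint : Integrable (fun x : ℝ => min (x ^ 2) 1) μ)
    {a b : ℝ} (ha : a ≠ 0) (hb : b ≠ 0) :
    √(∫ x, sin ((a + b) * x) ^ 2 ∂μ)
      < √(∫ x, sin (a * x) ^ 2 ∂μ) + √(∫ x, sin (b * x) ^ 2 ∂μ) := by
  set u : ℝ → ℝ := fun x => |sin (a * x)|
  set v : ℝ → ℝ := fun x => |sin (b * x)|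
  have hu : MemLp u 2 μ := (memLp_two_sin_mul hint a).norm
  have hv : MemLp v 2 μ := (memLp_two_sin_mul hint b).norm
  obtain ⟨x₀, hx₀, hax₀, hbx₀⟩ := exists_mem_measureSupport_sin_mul_ne_zero hunc ha hb
  calc √(∫ x, sin ((a + b) * x) ^ 2 ∂μ) < √(∫ x, (u x + v x) ^ 2 ∂μ) := by
        refine sqrt_lt_sqrt (integral_nonneg fun x => sq_nonneg _) ?_
        refine integral_lt_integral_of_lt_of_mem_measureSupport (by fun_prop) (by fun_prop)
          (memLp_two_sin_mul hint _).integrable_sq (hu.add hv).integrable_sq (fun x => ?_) hx₀ ?_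
        · rw [← sq_abs, add_mul]
          gcongr
          exact abs_sin_add_le _ _
        · rw [← sq_abs, add_mul]
          gcongr
          exact abs_sin_add_lt hax₀ hbx₀
    _ ≤ √(∫ x, u x ^ 2 ∂μ) + √(∫ x, v x ^ 2 ∂μ) := hu.sqrt_integral_add_sq_le hv
    _ = √(∫ x, sin (a * x) ^ 2 ∂μ) + √(∫ x, sin (b * x) ^ 2 ∂μ) := by simp only [u, v, sq_abs]

lemma sin_abs_mul_sq (m x : ℝ) : sin (|m| * x) ^ 2 = sin (m * x) ^ 2 := by
  rcases abs_choice m with h | h <;> simp [h, neg_mul, sin_neg]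

/-- **Strict triangle inequalities for an admissible cost function.** Let `λ`
be a Borel measure on `ℝ` with uncountable support and `∫ min(x², 1) dλ < ∞`,
and set `f(t) = (∫ sin²(tx) dλ(x))^{1/2}`.  For nonzero reals `m₁, m₂` with
`m₁ + m₂ ≠ 0`, the numbers `f(|m₁|), f(|m₂|), f(|m₁ + m₂|)` are the side
lengths of a nondegenerate triangle. -/
theorem admissible_cost_strict_triangle
    (lam : Measure ℝ)
    (hunc : ¬ (measureSupport lam).Countable)
    (hint : Integrable (fun x : ℝ => min (x ^ 2) 1) lam)
    (m₁ m₂ : ℝ) (h₁ : m₁ ≠ 0) (h₂ : m₂ ≠ 0) (h₁₂ : m₁ + m₂ ≠ 0) :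
    Real.sqrt (∫ x, Real.sin (|m₁ + m₂| * x) ^ 2 ∂lam)
        < Real.sqrt (∫ x, Real.sin (|m₁| * x) ^ 2 ∂lam)
          + Real.sqrt (∫ x, Real.sin (|m₂| * x) ^ 2 ∂lam) ∧
      Real.sqrt (∫ x, Real.sin (|m₁| * x) ^ 2 ∂lam)
        < Real.sqrt (∫ x, Real.sin (|m₂| * x) ^ 2 ∂lam)
          + Real.sqrt (∫ x, Real.sin (|m₁ + m₂| * x) ^ 2 ∂lam) ∧
      Real.sqrt (∫ x, Real.sin (|m₂| * x) ^ 2 ∂lam)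
        < Real.sqrt (∫ x, Real.sin (|m₁| * x) ^ 2 ∂lam)
          + Real.sqrt (∫ x, Real.sin (|m₁ + m₂| * x) ^ 2 ∂lam) := by
  simp only [sin_abs_mul_sq]
  have key {a b : ℝ} (ha : a ≠ 0) (hb : b ≠ 0) :=
    sqrt_integral_sin_add_mul_sq_lt hunc hint ha hb
  refine ⟨key h₁ h₂, ?_, ?_⟩
  · simpa [neg_mul, sin_neg, add_comm] using key h₁₂ (neg_ne_zero.2 h₂)
  · simpa [neg_mul, sin_neg, add_comm] using key h₁₂ (neg_ne_zero.2 h₁)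
end
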